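/- Hardy–Littlewood rearrangement inequality: for any two measurable functions f and g on (E, μ), ∫_E |f(x) g(x)| dμ(x) ≤ ∫_0^∞ f*(s) g*(s) ds. -/

import Mathlib

/-!
Layer-cake decompositions of `|f|` and `|g|` turn `∫ |f g| dμ` into
`∫∫ μ({|f| > s} ∩ {|g| > t}) ds dt`, which is at most `∫∫ min (μ_f s) (μ_g t) ds dt`.
Writing `min a b` as the length of `(0, a) ∩ (0, b)` and applying Tonelli, this double integral
becomes `∫ |{s : u < μ_f s}| · |{t : u < μ_g t}| du`. Right-continuity of `μ_f` gives
`u < μ_f s ↔ s < f* u`, so the two lengths are `f* u` and `g* u`.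
-/

open MeasureTheory Set ENNReal
open scoped NNReal

noncomputable section

/-- The distribution function `μ_f(λ) = μ {x : |f x| > λ}`. -/
def distrib {E : Type*} [MeasurableSpace E] (μ : Measure E) (f : E → ℂ) (lam : ℝ≥0∞) : ℝ≥0∞ :=
  μ {x | lam < (‖f x‖₊ : ℝ≥0∞)}

/-- The non-increasing rearrangement `f*(t) = inf {λ ≥ 0 : μ_f(λ) ≤ t}`. -/
def rearr {E : Type*} [MeasurableSpace E] (μ : Measure E) (f : E → ℂ) (t : ℝ≥0∞) : ℝ≥0∞ :=
  sInf {lam : ℝ≥0∞ | distrib μ f lam ≤ t}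

section LayerCake

variable {α : Type*} [MeasurableSpace α] (μ : Measure α)

theorem lintegral_coe_eq_lintegral_meas_ofReal_lt {F : α → ℝ≥0} (hF : AEMeasurable F μ) :
    ∫⁻ x, F x ∂μ = ∫⁻ s in Ioi 0, μ {x | ENNReal.ofReal s < F x} := by
  have key := lintegral_eq_lintegral_meas_lt μ (f := fun x => (F x : ℝ))
    (.of_forall fun x => (F x).2) hF.coe_nnreal_real
  simp only [ENNReal.ofReal_coe_nnreal] at key
  rw [key]
  refine setLIntegral_congr_fun measurableSet_Ioi fun s hs => ?_
  simp only [ENNReal.ofReal_lt_coe_iff (le_of_lt hs)]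

theorem lintegral_mul_eq_lintegral_lintegral_meas_inter {F G : α → ℝ≥0}
    (hF : Measurable F) (hG : Measurable G) :
    ∫⁻ x, (F x : ℝ≥0∞) * G x ∂μ = ∫⁻ s in Ioi 0, ∫⁻ t in Ioi 0,
      μ ({x | ENNReal.ofReal s < F x} ∩ {x | ENNReal.ofReal t < G x}) := by
  calc ∫⁻ x, (F x : ℝ≥0∞) * G x ∂μ = ∫⁻ x, F x ∂μ.withDensity (fun x => G x) := by
        rw [lintegral_withDensity_eq_lintegral_mul _ hG.coe_nnreal_ennreal
          hF.coe_nnreal_ennreal]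
        simp only [Pi.mul_apply, mul_comm]
    _ = ∫⁻ s in Ioi 0, ∫⁻ x in {x | ENNReal.ofReal s < F x}, G x ∂μ := by
        rw [lintegral_coe_eq_lintegral_meas_ofReal_lt _ hF.aemeasurable]
        exact lintegral_congr fun s =>
          withDensity_apply _ (measurableSet_lt measurable_const hF.coe_nnreal_ennreal)
    _ = _ := by
        refine lintegral_congr fun s => ?_
        rw [lintegral_coe_eq_lintegral_meas_ofReal_lt _ hG.aemeasurable.restrict]
        refine lintegral_congr fun t => ?_
        rw [Measure.restrict_apply (measurableSet_lt measurable_const hG.coe_nnreal_ennreal),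
          inter_comm]

theorem exists_lt_and_lt_measure_setOf_lt {F : α → ℝ≥0∞} {s u : ℝ≥0∞}
    (h : u < μ {x | s < F x}) : ∃ r, s < r ∧ u < μ {x | r < F x} := by
  have hs : s ≠ ∞ := by
    rintro rfl
    simp at h
  obtain ⟨r, r_anti, r_mem, r_lim⟩ := exists_seq_strictAnti_tendsto' hs.lt_top
  have hmono : Monotone fun n => {x | r n < F x} := fun m n hmn x hx =>
    (r_anti.antitone hmn).trans_lt hx
  have hunion : ⋃ n, {x | r n < F x} = {x | s < F x} := by
    ext x
    simp only [mem_iUnion, mem_ofPred_eq]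
    exact ⟨fun ⟨n, hn⟩ => (r_mem n).1.trans hn,
      fun hx => (r_lim.eventually (gt_mem_nhds hx)).exists⟩
  have hlim := tendsto_measure_iUnion_atTop (μ := μ) hmono
  rw [hunion] at hlim
  obtain ⟨n, hn⟩ := (hlim.eventually (lt_mem_nhds h)).exists
  exact ⟨r n, (r_mem n).1, hn⟩

end LayerCake

theorem volume_restrict_Ioi_setOf_ofReal_lt (a : ℝ≥0∞) :
    volume.restrict (Ioi (0 : ℝ)) {s | ENNReal.ofReal s < a} = a := by
  rw [Measure.restrict_apply (measurableSet_lt ENNReal.measurable_ofReal measurable_const)]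
  rcases eq_or_ne a ∞ with rfl | ha
  · simp
  · have hIoo : {s : ℝ | ENNReal.ofReal s < a} ∩ Ioi 0 = Ioo 0 a.toReal := by
      ext s
      simp only [mem_inter_iff, mem_ofPred_eq, mem_Ioi, mem_Ioo]
      exact ⟨fun ⟨h1, h2⟩ => ⟨h2, (ofReal_lt_iff_lt_toReal h2.le ha).1 h1⟩,
        fun ⟨h1, h2⟩ => ⟨(ofReal_lt_iff_lt_toReal h1.le ha).2 h2, h1⟩⟩
    rw [hIoo, Real.volume_Ioo, sub_zero, ofReal_toReal ha]

theorem min_eq_lintegral_indicator_mul_indicator (a b : ℝ≥0∞) :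
    min a b = ∫⁻ u in Ioi 0,
      {u : ℝ | ENNReal.ofReal u < a}.indicator 1 u *
        {u : ℝ | ENNReal.ofReal u < b}.indicator 1 u := by
  have hinter : ∀ u : ℝ, {u : ℝ | ENNReal.ofReal u < a}.indicator (1 : ℝ → ℝ≥0∞) u *
      {u : ℝ | ENNReal.ofReal u < b}.indicator 1 u =
        {u : ℝ | ENNReal.ofReal u < min a b}.indicator 1 u := fun u => by
    rw [← Pi.mul_apply, ← inter_indicator_one]
    simp only [lt_min_iff, ← ofPred_and]
  simp_rw [hinter]
  rw [lintegral_indicator_one (measurableSet_lt ENNReal.measurable_ofReal measurable_const),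
    volume_restrict_Ioi_setOf_ofReal_lt]

theorem lintegral_lintegral_min_eq {φ ψ : ℝ → ℝ≥0∞} (hφ : Measurable φ) (hψ : Measurable ψ) :
    ∫⁻ s in Ioi 0, ∫⁻ t in Ioi 0, min (φ s) (ψ t) =
      ∫⁻ u in Ioi 0, volume.restrict (Ioi 0) {s | ENNReal.ofReal u < φ s} *
        volume.restrict (Ioi 0) {t | ENNReal.ofReal u < ψ t} := by
  let below (χ : ℝ → ℝ≥0∞) (s u : ℝ) : ℝ≥0∞ :=
    {p : ℝ × ℝ | ENNReal.ofReal p.2 < χ p.1}.indicator 1 (s, u)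
  have below_measurable {χ : ℝ → ℝ≥0∞} (hχ : Measurable χ) :
      Measurable (Function.uncurry (below χ)) :=
    measurable_one.indicator
      (measurableSet_lt (ENNReal.measurable_ofReal.comp measurable_snd) (hχ.comp measurable_fst))
  have below_measurable_left {χ : ℝ → ℝ≥0∞} (hχ : Measurable χ) (u : ℝ) :
      Measurable fun s => below χ s u :=
    (below_measurable hχ).comp (measurable_id.prodMk measurable_const)
  have lintegral_below {χ : ℝ → ℝ≥0∞} (hχ : Measurable χ) (u : ℝ) :
      ∫⁻ s in Ioi 0, below χ s u = volume.restrict (Ioi 0) {s | ENNReal.ofReal u < χ s} :=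
    lintegral_indicator_one (s := {s | ENNReal.ofReal u < χ s})
      (measurableSet_lt measurable_const hχ)
  calc ∫⁻ s in Ioi 0, ∫⁻ t in Ioi 0, min (φ s) (ψ t)
      = ∫⁻ s in Ioi 0, ∫⁻ t in Ioi 0, ∫⁻ u in Ioi 0, below φ s u * below ψ t u := by
        simp_rw [min_eq_lintegral_indicator_mul_indicator]
        rfl
    _ = ∫⁻ s in Ioi 0, ∫⁻ u in Ioi 0, below φ s u * ∫⁻ t in Ioi 0, below ψ t u := by
        refine lintegral_congr fun s => ?_
        rw [lintegral_lintegral_swap (by fun_prop)]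
        exact lintegral_congr fun u => lintegral_const_mul _ (below_measurable_left hψ u)
    _ = ∫⁻ u in Ioi 0, ∫⁻ s in Ioi 0, below φ s u * ∫⁻ t in Ioi 0, below ψ t u :=
        lintegral_lintegral_swap
          ((below_measurable hφ).mul ((below_measurable hψ).lintegral_prod_left'.comp
            measurable_snd)).aemeasurable
    _ = _ := by
        refine lintegral_congr fun u => ?_
        rw [lintegral_mul_const _ (below_measurable_left hφ u), lintegral_below hφ,
          lintegral_below hψ]

section Rearrangement

variable {E : Type*} [MeasurableSpace E] (μ : Measure E)

theorem distrib_antitone (f : E → ℂ) : Antitone (distrib μ f) := fun _ _ hab =>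
  measure_mono fun _ hx => hab.trans_lt hx

theorem measurable_distrib_ofReal (f : E → ℂ) :
    Measurable fun s : ℝ => distrib μ f (ENNReal.ofReal s) :=
  ((distrib_antitone μ f).comp_monotone fun _ _ => ENNReal.ofReal_le_ofReal).measurable

theorem lt_rearr_iff {f : E → ℂ} {s u : ℝ≥0∞} : s < rearr μ f u ↔ u < distrib μ f s := by
  constructor
  · intro h
    by_contra! hsu
    exact h.not_ge (sInf_le hsu)
  · intro h
    obtain ⟨r, hsr, hur⟩ := exists_lt_and_lt_measure_setOf_lt μ h
    refine hsr.trans_le (le_sInf fun l hl => ?_)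
    by_contra! hlr
    exact (hur.trans_le (distrib_antitone μ f hlr.le)).not_ge hl

end Rearrangement

theorem hardy_littlewood_rearrangement_general {E : Type*} [MeasurableSpace E] (μ : Measure E)
    (f g : E → ℂ) (hf : Measurable f) (hg : Measurable g) :
    ∫⁻ x, (‖f x‖₊ : ℝ≥0∞) * (‖g x‖₊ : ℝ≥0∞) ∂μ ≤
      ∫⁻ s in Ioi (0 : ℝ), rearr μ f (ENNReal.ofReal s) * rearr μ g (ENNReal.ofReal s) := by
  calc ∫⁻ x, (‖f x‖₊ : ℝ≥0∞) * (‖g x‖₊ : ℝ≥0∞) ∂μ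
      = ∫⁻ s in Ioi 0, ∫⁻ t in Ioi 0, μ ({x | ENNReal.ofReal s < ‖f x‖₊} ∩
          {x | ENNReal.ofReal t < ‖g x‖₊}) :=
        lintegral_mul_eq_lintegral_lintegral_meas_inter μ hf.nnnorm hg.nnnorm
    _ ≤ ∫⁻ s in Ioi 0, ∫⁻ t in Ioi 0,
          min (distrib μ f (ENNReal.ofReal s)) (distrib μ g (ENNReal.ofReal t)) := by
        gcongr with s t
        exact le_min (measure_mono inter_subset_left) (measure_mono inter_subset_right)
    _ = ∫⁻ u in Ioi 0,
          volume.restrict (Ioi 0) {s | ENNReal.ofReal u < distrib μ f (ENNReal.ofReal s)} *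
            volume.restrict (Ioi 0) {t | ENNReal.ofReal u < distrib μ g (ENNReal.ofReal t)} :=
        lintegral_lintegral_min_eq (measurable_distrib_ofReal μ f) (measurable_distrib_ofReal μ g)
    _ = _ := by
        simp_rw [← lt_rearr_iff, volume_restrict_Ioi_setOf_ofReal_lt]

/-- **Hardy–Littlewood rearrangement inequality**: for measurable functions `f, g`
on a non-atomic σ-finite measure space `(E, μ)`,
`∫_E |f x * g x| dμ(x) ≤ ∫_0^∞ f*(s) g*(s) ds`. -/
theorem hardy_littlewood_rearrangement {E : Type*} [MeasurableSpace E] (μ : Measure E)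
    [SigmaFinite μ] [NullSingletonClass μ] (f g : E → ℂ) (hf : Measurable f) (hg : Measurable g) :
    ∫⁻ x, (‖f x‖₊ : ℝ≥0∞) * (‖g x‖₊ : ℝ≥0∞) ∂μ ≤
      ∫⁻ s in Ioi (0 : ℝ), rearr μ f (ENNReal.ofReal s) * rearr μ g (ENNReal.ofReal s) :=
  hardy_littlewood_rearrangement_general μ f g hf hg
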